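/- Let a₁ > 0, ψ ∈ C²(ℝ) with ψ(s) ≥ ν > 0 for all s ∈ ℝ, let k > 2 and p with k/2 < p, and assume inf_{s≥0}(kψ(s) − sψ'(s)) ≥ 0, lim_{s→+∞} s^{(2−k)/2}ψ(s) = 0, lim_{s→+∞} s^{(4−k)/2}ψ'(s) = 0 and lim_{s→+∞} s^{(6−k)/2}ψ''(s) = 0. Set a₀(s) = a₁|s|^k + ψ(s), let g₀ be the solution of g₀'(s) = 1/√(a₀(g₀(s))), g₀(0) = 0, and define 𝓗₁(s) = −(1/2) a₀''(g₀(s)) s g₀(s)² (g₀'(s))³ + (3/4)(a₀'(g₀(s)))² s g₀(s)² (g₀'(s))⁵ − (1/2) a₀'(g₀(s)) g₀(s) (g₀'(s))² (p s g₀'(s) + g₀(s)) − p s g₀'(s) + p g₀(s). Then for every ε ∈ (0,1) there exists s₁ > 0 such that for all s ≥ s₁, 𝓗₁(s) ≤ ((1−ε)/4)(k+2)(k−2p) g₀'(s) G₀(s) < 0, where G₀(s) = s − (2/(k+2)) g₀(s)√(a₀(g₀(s))). -/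

import Mathlib

/-!
Write `T = g₀ s` and `R = √(a₀ T) = 1 / g₀'(s)`. Substituting `s = G₀(s) + (2/(k+2)) T R` turns
`𝓗₁(s)` into `g₀'(s) (L G₀(s) + W)`, where, after dividing out powers of `T^{k/2}`, `L` and `W`
are rational functions of `η = T^{-(k+2)/2}` and of the three quantities `T^{(2-k)/2} ψ(T)`,
`T^{(4-k)/2} ψ'(T)`, `T^{(6-k)/2} ψ''(T)` that the hypotheses send to `0`; the terms of order `T^k`
cancel in `W`. Since `g₀ → ∞`, this gives `L → (k+2)(k-2p)/4 < 0` and `W → 0`.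
On the other hand `G₀'(s) = (kψ(T) - Tψ'(T)) / ((k+2) a₀(T)) ≥ 0`, and `G₀` is strictly increasing
near `0` because `kψ(0) > 0`; so `G₀(s) ≥ G₀(s₀) > 0` eventually, and `W` is absorbed by an
`ε`-fraction of `L G₀(s)`.
-/

open Filter Real Topology Set

lemma tendsto_atTop_of_hasDerivAt_comp {g h : ℝ → ℝ} (hg : ∀ s, HasDerivAt g (h (g s)) s)
    (hh : Continuous h) (hpos : ∀ y, 0 < h y) : Tendsto g atTop atTop := by
  have hmono : Monotone g := (strictMono_of_hasDerivAt_pos hg fun _ => hpos _).monotone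
  refine tendsto_atTop_atTop_of_monotone hmono fun b => ?_
  by_contra! hb
  obtain ⟨y, -, hy⟩ := isCompact_Icc.exists_isMinOn (nonempty_Icc.2 (hb 0).le) hh.continuousOn
  have hslope : ∀ s ≥ 0, h y * s ≤ g s - g 0 := by
    intro s hs
    have hderiv : ∀ x ∈ interior (Ici (0 : ℝ)), h y ≤ deriv g x := fun x hx => by
      rw [(hg x).deriv]
      exact hy ⟨hmono (interior_subset hx), (hb x).le⟩
    simpa using (convex_Ici 0).mul_sub_le_image_sub_of_le_deriv
      (fun x _ => (hg x).continuousAt.continuousWithinAt)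
      (fun x _ => (hg x).differentiableAt.differentiableWithinAt) hderiv 0 self_mem_Ici s hs hs
  have hlarge := hslope ((b - g 0) / h y) (div_nonneg (sub_nonneg.2 (hb 0).le) (hpos y).le)
  rw [mul_div_cancel₀ _ (hpos y).ne'] at hlarge
  linarith [hb ((b - g 0) / h y)]

section G

variable {k : ℝ} {a g G : ℝ → ℝ}

lemma hasDerivAt_G (hk : k + 2 ≠ 0) (hG : ∀ s, G s = s - 2 / (k + 2) * g s * √(a (g s)))
    {s a' : ℝ} (hg : HasDerivAt g (1 / √(a (g s))) s) (ha : HasDerivAt a a' (g s))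
    (hpos : 0 < a (g s)) :
    HasDerivAt G ((k * a (g s) - g s * a') / ((k + 2) * a (g s))) s := by
  have h : HasDerivAt (fun x => x - 2 / (k + 2) * g x * √(a (g x))) _ s :=
    (hasDerivAt_id' s).sub ((hg.const_mul _).mul ((ha.comp s hg).sqrt hpos.ne'))
  rw [show G = _ from funext hG]
  refine h.congr_deriv ?_
  have hR : √(a (g s)) ^ 2 = a (g s) := sq_sqrt hpos.le
  have hR0 : √(a (g s)) ≠ 0 := (sqrt_pos.2 hpos).ne'
  simp only [Function.comp_apply]
  field_simp
  rw [hR]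
  ring

lemma pos_of_hasDerivAt_inv_sqrt (hg : ∀ s, HasDerivAt g (1 / √(a (g s))) s) (hg0 : g 0 = 0)
    (hpos : ∀ y, 0 < a y) {s : ℝ} (hs : 0 < s) : 0 < g s :=
  hg0 ▸ strictMono_of_hasDerivAt_pos hg (fun s => by have := hpos (g s); positivity) hs

lemma continuous_G (hG : ∀ s, G s = s - 2 / (k + 2) * g s * √(a (g s))) (hg : Continuous g)
    (ha : Continuous a) : Continuous G := by
  rw [show G = _ from funext hG]
  fun_prop

lemma hasDerivAt_G_of_pos (hk : k + 2 ≠ 0) (hG : ∀ s, G s = s - 2 / (k + 2) * g s * √(a (g s)))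
    (hg : ∀ s, HasDerivAt g (1 / √(a (g s))) s) (hg0 : g 0 = 0) (hpos : ∀ y, 0 < a y)
    (hdiff : ∀ t > 0, DifferentiableAt ℝ a t) {s : ℝ} (hs : 0 < s) :
    HasDerivAt G ((k * a (g s) - g s * deriv a (g s)) / ((k + 2) * a (g s))) s :=
  hasDerivAt_G hk hG (hg s) (hdiff _ (pos_of_hasDerivAt_inv_sqrt hg hg0 hpos hs)).hasDerivAt
    (hpos _)

lemma monotoneOn_G (hk : 0 < k + 2) (hG : ∀ s, G s = s - 2 / (k + 2) * g s * √(a (g s)))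
    (hg : ∀ s, HasDerivAt g (1 / √(a (g s))) s) (hg0 : g 0 = 0) (hpos : ∀ y, 0 < a y)
    (ha : Continuous a) (hdiff : ∀ t > 0, DifferentiableAt ℝ a t)
    (hsign : ∀ t > 0, 0 ≤ k * a t - t * deriv a t) : MonotoneOn G (Ici 0) := by
  have hG' {s : ℝ} (hs : s ∈ interior (Ici 0)) := hasDerivAt_G_of_pos hk.ne' hG hg hg0 hpos hdiff
    (interior_Ici.subset hs)
  refine monotoneOn_of_deriv_nonneg (convex_Ici 0)
    (continuous_G hG (continuous_iff_continuousAt.2 fun s => (hg s).continuousAt) ha).continuousOn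
    (fun s hs => (hG' hs).differentiableAt.differentiableWithinAt) fun s hs => ?_
  have := hpos (g s)
  rw [(hG' hs).deriv]
  exact div_nonneg (hsign _ (pos_of_hasDerivAt_inv_sqrt hg hg0 hpos (interior_Ici.subset hs)))
    (by positivity)

lemma exists_pos_G (hk : 0 < k + 2) (hG : ∀ s, G s = s - 2 / (k + 2) * g s * √(a (g s)))
    (hg : ∀ s, HasDerivAt g (1 / √(a (g s))) s) (hg0 : g 0 = 0) (hpos : ∀ y, 0 < a y)
    (ha : Continuous a) (hdiff : ∀ t > 0, DifferentiableAt ℝ a t)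
    (hnear : ∀ᶠ t in 𝓝[>] 0, 0 < k * a t - t * deriv a t) : ∃ s₀ > 0, 0 < G s₀ := by
  have hg_cont : Tendsto g (𝓝 0) (𝓝 0) := by
    simpa only [hg0] using (hg 0).continuousAt.tendsto
  have hg_within : Tendsto g (𝓝[>] 0) (𝓝[>] 0) := tendsto_nhdsWithin_iff.2
    ⟨hg_cont.mono_left nhdsWithin_le_nhds,
      eventually_nhdsWithin_of_forall fun _ hs => pos_of_hasDerivAt_inv_sqrt hg hg0 hpos hs⟩
  obtain ⟨u, hu, hsub⟩ := mem_nhdsGT_iff_exists_Ioo_subset.1 (hg_within.eventually hnear)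
  have hmono : StrictMonoOn G (Icc 0 u) := by
    refine strictMonoOn_of_deriv_pos (convex_Icc 0 u) (continuous_G hG
      (continuous_iff_continuousAt.2 fun s => (hg s).continuousAt) ha).continuousOn fun s hs => ?_
    rw [interior_Icc] at hs
    have := hpos (g s)
    rw [(hasDerivAt_G_of_pos hk.ne' hG hg hg0 hpos hdiff hs.1).deriv]
    exact div_pos (hsub hs) (by positivity)
  refine ⟨u, hu, ?_⟩
  simpa [hG 0, hg0] using hmono (left_mem_Icc.2 (le_of_lt hu)) (right_mem_Icc.2 (le_of_lt hu)) hu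

end G

section Potential

variable {k a₁ : ℝ} {ψ a₀ : ℝ → ℝ}

lemma hasDerivAt_a₀ (ha₀ : ∀ s, a₀ s = a₁ * |s| ^ k + ψ s) {t : ℝ} (hψ : DifferentiableAt ℝ ψ t)
    (ht : 0 < t) : HasDerivAt a₀ (a₁ * k * t ^ (k - 1) + deriv ψ t) t := by
  have hloc : (fun y => a₁ * y ^ k + ψ y) =ᶠ[𝓝 t] a₀ := by
    filter_upwards [lt_mem_nhds ht] with y hy
    rw [ha₀, abs_of_pos hy]
  have h : HasDerivAt (fun y => a₁ * y ^ k + ψ y) (a₁ * (k * t ^ (k - 1)) + deriv ψ t) t :=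
    ((hasDerivAt_rpow_const (p := k) (Or.inl ht.ne')).const_mul a₁).add hψ.hasDerivAt
  exact (h.congr_of_eventuallyEq hloc.symm).congr_deriv (by ring)

lemma deriv_deriv_a₀ (ha₀ : ∀ s, a₀ s = a₁ * |s| ^ k + ψ s) (hψ : ContDiff ℝ 2 ψ) {t : ℝ}
    (ht : 0 < t) : deriv (deriv a₀) t = a₁ * k * (k - 1) * t ^ (k - 2) + deriv (deriv ψ) t := by
  have hloc : (fun y => a₁ * k * y ^ (k - 1) + deriv ψ y) =ᶠ[𝓝 t] deriv a₀ := by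
    filter_upwards [lt_mem_nhds ht] with y hy
    exact ((hasDerivAt_a₀ ha₀ (hψ.differentiable two_ne_zero y) hy).deriv).symm
  have h : HasDerivAt (fun y => a₁ * k * y ^ (k - 1) + deriv ψ y)
      (a₁ * k * ((k - 1) * t ^ (k - 1 - 1)) + deriv (deriv ψ) t) t :=
    ((hasDerivAt_rpow_const (p := k - 1) (Or.inl ht.ne')).const_mul (a₁ * k)).add
      (hψ.differentiable_deriv_two t).hasDerivAt
  rw [← hloc.deriv_eq, h.deriv, show k - 1 - 1 = k - 2 by ring]
  ring

lemma k_mul_a₀_sub (ha₀ : ∀ s, a₀ s = a₁ * |s| ^ k + ψ s) {t : ℝ} (hψ : DifferentiableAt ℝ ψ t)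
    (ht : 0 < t) : k * a₀ t - t * deriv a₀ t = k * ψ t - t * deriv ψ t := by
  rw [(hasDerivAt_a₀ ha₀ hψ ht).deriv, ha₀, abs_of_pos ht, rpow_sub_one ht.ne']
  field_simp
  ring

lemma eventually_pos_k_mul_a₀_sub (ha₀ : ∀ s, a₀ s = a₁ * |s| ^ k + ψ s) (hψ : ContDiff ℝ 2 ψ)
    (h0 : 0 < k * ψ 0) : ∀ᶠ t in 𝓝[>] 0, 0 < k * a₀ t - t * deriv a₀ t := by
  have hcont : Continuous fun t => k * ψ t - t * deriv ψ t :=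
    (continuous_const.mul hψ.continuous).sub (continuous_id.mul (hψ.continuous_deriv one_le_two))
  have hnear : ∀ᶠ t in 𝓝 0, 0 < k * ψ t - t * deriv ψ t :=
    hcont.continuousAt.eventually (lt_mem_nhds (by simpa using h0))
  filter_upwards [self_mem_nhdsWithin, nhdsWithin_le_nhds hnear] with t ht hpos
  rwa [k_mul_a₀_sub ha₀ (hψ.differentiable two_ne_zero t) ht]

lemma a₀_pos (ha₀ : ∀ s, a₀ s = a₁ * |s| ^ k + ψ s) (ha₁ : 0 ≤ a₁) (hψ : ∀ s, 0 < ψ s) (t : ℝ) :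
    0 < a₀ t := by
  have := hψ t
  rw [ha₀]
  positivity

lemma continuous_a₀ (ha₀ : ∀ s, a₀ s = a₁ * |s| ^ k + ψ s) (hk : 0 ≤ k) (hψ : Continuous ψ) :
    Continuous a₀ := by
  rw [show a₀ = _ from funext ha₀]
  exact (continuous_const.mul (continuous_abs.rpow_const fun _ => Or.inr hk)).add hψ

end Potential

-- The coefficients `L` and `W` of the sketch above, as functions of `η, r₁, r₂, r₃`.
noncomputable def leadCoeff (k p a₁ η r₁ r₂ r₃ : ℝ) : ℝ :=
  (-(1 / 2) * (k * (k - 1) * a₁ + η * r₃) * (a₁ + η * r₁) + (3 / 4) * (k * a₁ + η * r₂) ^ 2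
    - (p / 2) * (k * a₁ + η * r₂) * (a₁ + η * r₁) - p * (a₁ + η * r₁) ^ 2) / (a₁ + η * r₁) ^ 2

noncomputable def remainderCoeff (k p a₁ η r₁ r₂ r₃ : ℝ) : ℝ :=
  (a₁ * (k * (2 * p - 3 * k) * r₁ + (5 * k - 2 * p - 2) * r₂ - 2 * r₃)
    + η * (2 * p * k * r₁ ^ 2 - (2 * p + k + 2) * r₁ * r₂ + 3 * r₂ ^ 2 - 2 * r₁ * r₃))
    / (2 * (k + 2) * √(a₁ + η * r₁) ^ 3)

noncomputable def leadCoeffAt (k p a₁ : ℝ) (ψ : ℝ → ℝ) (t : ℝ) : ℝ :=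
  leadCoeff k p a₁ (t ^ (-((k + 2) / 2))) (t ^ ((2 - k) / 2) * ψ t)
    (t ^ ((4 - k) / 2) * deriv ψ t) (t ^ ((6 - k) / 2) * deriv (deriv ψ) t)

noncomputable def remainderCoeffAt (k p a₁ : ℝ) (ψ : ℝ → ℝ) (t : ℝ) : ℝ :=
  remainderCoeff k p a₁ (t ^ (-((k + 2) / 2))) (t ^ ((2 - k) / 2) * ψ t)
    (t ^ ((4 - k) / 2) * deriv ψ t) (t ^ ((6 - k) / 2) * deriv (deriv ψ) t)

section Limits

variable {α : Type*} {l : Filter α} {k p a₁ : ℝ} {η r₁ r₂ r₃ : α → ℝ}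

lemma tendsto_leadCoeff (ha₁ : a₁ ≠ 0) (hη : Tendsto η l (𝓝 0)) (h₁ : Tendsto r₁ l (𝓝 0))
    (h₂ : Tendsto r₂ l (𝓝 0)) (h₃ : Tendsto r₃ l (𝓝 0)) :
    Tendsto (fun x => leadCoeff k p a₁ (η x) (r₁ x) (r₂ x) (r₃ x)) l
      (𝓝 (-((k + 2) * (2 * p - k) / 4))) := by
  have hc : ContinuousAt (fun x : ℝ × ℝ × ℝ × ℝ => leadCoeff k p a₁ x.1 x.2.1 x.2.2.1 x.2.2.2)
      (0, 0, 0, 0) := by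
    unfold leadCoeff
    exact ContinuousAt.div (by fun_prop) (by fun_prop) (by simp [ha₁])
  have h0 : leadCoeff k p a₁ 0 0 0 0 = -((k + 2) * (2 * p - k) / 4) := by
    simp only [leadCoeff, zero_mul, add_zero]
    field_simp
    ring
  have h := hc.tendsto.comp (hη.prodMk_nhds (h₁.prodMk_nhds (h₂.prodMk_nhds h₃)))
  rwa [← h0]

lemma tendsto_remainderCoeff (ha₁ : 0 < a₁) (hk : k + 2 ≠ 0) (hη : Tendsto η l (𝓝 0))
    (h₁ : Tendsto r₁ l (𝓝 0)) (h₂ : Tendsto r₂ l (𝓝 0)) (h₃ : Tendsto r₃ l (𝓝 0)) :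
    Tendsto (fun x => remainderCoeff k p a₁ (η x) (r₁ x) (r₂ x) (r₃ x)) l (𝓝 0) := by
  have hc : ContinuousAt
      (fun x : ℝ × ℝ × ℝ × ℝ => remainderCoeff k p a₁ x.1 x.2.1 x.2.2.1 x.2.2.2) (0, 0, 0, 0) := by
    unfold remainderCoeff
    refine ContinuousAt.div (by fun_prop) (by fun_prop) ?_
    simp [hk, ha₁.ne', ha₁.le]
  have h0 : remainderCoeff k p a₁ 0 0 0 0 = 0 := by simp [remainderCoeff]
  have h := hc.tendsto.comp (hη.prodMk_nhds (h₁.prodMk_nhds (h₂.prodMk_nhds h₃)))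
  rwa [← h0]

end Limits

section Asymptotics

variable {k p a₁ : ℝ} {ψ : ℝ → ℝ}

lemma tendsto_leadCoeffAt (ha₁ : a₁ ≠ 0) (hk : -2 < k)
    (hlim1 : Tendsto (fun s : ℝ => s ^ ((2 - k) / 2) * ψ s) atTop (𝓝 0))
    (hlim2 : Tendsto (fun s : ℝ => s ^ ((4 - k) / 2) * deriv ψ s) atTop (𝓝 0))
    (hlim3 : Tendsto (fun s : ℝ => s ^ ((6 - k) / 2) * deriv (deriv ψ) s) atTop (𝓝 0)) :
    Tendsto (leadCoeffAt k p a₁ ψ) atTop (𝓝 (-((k + 2) * (2 * p - k) / 4))) :=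
  tendsto_leadCoeff ha₁ (tendsto_rpow_neg_atTop (by linarith)) hlim1 hlim2 hlim3

lemma tendsto_remainderCoeffAt (ha₁ : 0 < a₁) (hk : -2 < k)
    (hlim1 : Tendsto (fun s : ℝ => s ^ ((2 - k) / 2) * ψ s) atTop (𝓝 0))
    (hlim2 : Tendsto (fun s : ℝ => s ^ ((4 - k) / 2) * deriv ψ s) atTop (𝓝 0))
    (hlim3 : Tendsto (fun s : ℝ => s ^ ((6 - k) / 2) * deriv (deriv ψ) s) atTop (𝓝 0)) :
    Tendsto (remainderCoeffAt k p a₁ ψ) atTop (𝓝 0) :=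
  tendsto_remainderCoeff ha₁ (by linarith) (tendsto_rpow_neg_atTop (by linarith)) hlim1 hlim2 hlim3

end Asymptotics

-- `l`, `R`, `a'`, `a''` stand for `T ^ (k / 2)`, `√(a₀ T)`, `a₀'(T)` and `a₀''(T)`.
lemma decomposition_of_sq_eq {k p a₁ s T l R ψ₀ ψ₁ ψ₂ a' a'' : ℝ} (hk : 0 < k + 2) (hT : 0 < T)
    (hl : 0 < l) (hR : 0 < R) (hR2 : R ^ 2 = a₁ * l ^ 2 + ψ₀)
    (ha' : a' = a₁ * k * (l ^ 2 / T) + ψ₁) (ha'' : a'' = a₁ * k * (k - 1) * (l ^ 2 / T ^ 2) + ψ₂) :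
    -(1 / 2) * a'' * s * T ^ 2 * (1 / R) ^ 3 + (3 / 4) * a' ^ 2 * s * T ^ 2 * (1 / R) ^ 5
      - (1 / 2) * a' * T * (1 / R) ^ 2 * (p * s * (1 / R) + T) - p * s * (1 / R) + p * T
    = 1 / R * (leadCoeff k p a₁ (1 / (T * l)) (T / l * ψ₀) (T ^ 2 / l * ψ₁) (T ^ 3 / l * ψ₂)
          * (s - 2 / (k + 2) * T * R)
        + remainderCoeff k p a₁ (1 / (T * l)) (T / l * ψ₀) (T ^ 2 / l * ψ₁) (T ^ 3 / l * ψ₂)) := by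
  have hsqrt : √(a₁ + 1 / (T * l) * (T / l * ψ₀)) = R / l := by
    rw [sqrt_eq_iff_mul_self_eq_of_pos (by positivity)]
    field_simp
    linarith
  have hψ₀ : ψ₀ = R ^ 2 - a₁ * l ^ 2 := by linarith
  unfold leadCoeff remainderCoeff
  rw [hsqrt, ha', ha'']
  subst hψ₀
  field_simp
  ring

lemma H₁_decomposition {k p a₁ : ℝ} {ψ a₀ : ℝ → ℝ} (hk : 0 < k + 2)
    (ha₀ : ∀ s, a₀ s = a₁ * |s| ^ k + ψ s) (hψ : ContDiff ℝ 2 ψ) {s T : ℝ} (hT : 0 < T)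
    (hpos : 0 < a₀ T) :
    -(1 / 2) * deriv (deriv a₀) T * s * T ^ 2 * (1 / √(a₀ T)) ^ 3
        + (3 / 4) * (deriv a₀ T) ^ 2 * s * T ^ 2 * (1 / √(a₀ T)) ^ 5
        - (1 / 2) * deriv a₀ T * T * (1 / √(a₀ T)) ^ 2 * (p * s * (1 / √(a₀ T)) + T)
        - p * s * (1 / √(a₀ T)) + p * T
      = 1 / √(a₀ T) * (leadCoeffAt k p a₁ ψ T * (s - 2 / (k + 2) * T * √(a₀ T))
        + remainderCoeffAt k p a₁ ψ T) := by
  set l := T ^ (k / 2) with hl_def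
  have hl : 0 < l := rpow_pos_of_pos hT _
  have hTk : T ^ k = l ^ 2 := by rw [hl_def, ← rpow_natCast, ← rpow_mul hT.le]; norm_num
  have hη : T ^ (-((k + 2) / 2)) = 1 / (T * l) := by
    rw [rpow_neg hT.le, show (k + 2) / 2 = 1 + k / 2 by ring, rpow_add hT, rpow_one, one_div]
  have hr₁ : T ^ ((2 - k) / 2) = T / l := by
    rw [show (2 - k) / 2 = 1 - k / 2 by ring, rpow_sub hT, rpow_one]
  have hr₂ : T ^ ((4 - k) / 2) = T ^ 2 / l := by
    rw [show (4 - k) / 2 = 2 - k / 2 by ring, rpow_sub hT, rpow_two]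
  have hr₃ : T ^ ((6 - k) / 2) = T ^ 3 / l := by
    rw [show (6 - k) / 2 = ((3 : ℕ) : ℝ) - k / 2 by push_cast; ring, rpow_sub hT, rpow_natCast]
  have hψ₁ := hψ.differentiable two_ne_zero T
  unfold leadCoeffAt remainderCoeffAt
  rw [hη, hr₁, hr₂, hr₃]
  refine decomposition_of_sq_eq hk hT hl (sqrt_pos.2 hpos) ?_ ?_ ?_
  · rw [sq_sqrt hpos.le, ha₀, abs_of_pos hT, hTk]
  · rw [(hasDerivAt_a₀ ha₀ hψ₁ hT).deriv, rpow_sub_one hT.ne', hTk]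
  · rw [deriv_deriv_a₀ ha₀ hψ hT, rpow_sub hT, rpow_two, hTk]

lemma exists_forall_ge_mul_le_of_tendsto {L W G R : ℝ → ℝ} {m ε s₀ : ℝ} (hm : 0 < m)
    (hε : ε ∈ Ioo (0 : ℝ) 1) (hL : Tendsto L atTop (𝓝 (-m))) (hW : Tendsto W atTop (𝓝 0))
    (hs₀ : 0 < s₀) (hGs₀ : 0 < G s₀) (hG : ∀ s ≥ s₀, G s₀ ≤ G s) (hR : ∀ s, 0 < R s) :
    ∃ s₁ > 0, ∀ s ≥ s₁,
      R s * (L s * G s + W s) ≤ -((1 - ε) * m) * R s * G s ∧ -((1 - ε) * m) * R s * G s < 0 := by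
  obtain ⟨hε0, hε1⟩ := hε
  obtain ⟨s₁, hs₁⟩ := eventually_atTop.1
    ((hL.eventually (gt_mem_nhds (show -m < -m + ε * m / 2 by nlinarith))).and
      ((hW.eventually (gt_mem_nhds (show 0 < ε * m / 2 * G s₀ by positivity))).and
        (eventually_ge_atTop s₀)))
  refine ⟨s₁, hs₀.trans_le (hs₁ s₁ le_rfl).2.2, fun s hs => ?_⟩
  obtain ⟨hLs, hWs, hs₀s⟩ := hs₁ s hs
  have hGs := hG s hs₀s
  have hlead : L s * G s ≤ (-m + ε * m / 2) * G s :=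
    mul_le_mul_of_nonneg_right hLs.le (hGs₀.trans_le hGs).le
  have hrem : ε * m / 2 * G s₀ ≤ ε * m / 2 * G s := mul_le_mul_of_nonneg_left hGs (by positivity)
  constructor
  · calc _ ≤ R s * (-((1 - ε) * m) * G s) :=
          mul_le_mul_of_nonneg_left (by linarith) (hR s).le
      _ = _ := by ring
  · have := mul_pos (mul_pos (mul_pos (sub_pos.2 hε1) hm) (hR s)) (hGs₀.trans_le hGs)
    linarith

theorem H1_eventually_negative
    (k a₁ : ℝ) (ha₁ : 0 < a₁)
    (ψ : ℝ → ℝ) (ν : ℝ) (hν : 0 < ν)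
    (hψ : ContDiff ℝ 2 ψ) (hbound : ∀ s, ν ≤ ψ s)
    (p : ℝ) (hk : 2 < k) (hkp : k / 2 < p)
    (hsign : ∀ s ≥ (0 : ℝ), 0 ≤ k * ψ s - s * deriv ψ s)
    (hlim1 : Tendsto (fun s : ℝ => s ^ ((2 - k) / 2) * ψ s) atTop (𝓝 0))
    (hlim2 : Tendsto (fun s : ℝ => s ^ ((4 - k) / 2) * deriv ψ s) atTop (𝓝 0))
    (hlim3 : Tendsto (fun s : ℝ => s ^ ((6 - k) / 2) * deriv (deriv ψ) s) atTop (𝓝 0))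
    (a₀ : ℝ → ℝ) (ha₀ : ∀ s, a₀ s = a₁ * |s| ^ k + ψ s)
    (g₀ : ℝ → ℝ)
    (hg₀ : ∀ s, HasDerivAt g₀ (1 / Real.sqrt (a₀ (g₀ s))) s) (hg₀0 : g₀ 0 = 0)
    (H₁ : ℝ → ℝ)
    (hH₁ : ∀ s,
      H₁ s = -(1 / 2) * deriv (deriv a₀) (g₀ s) * s * (g₀ s) ^ 2 * (deriv g₀ s) ^ 3
        + (3 / 4) * (deriv a₀ (g₀ s)) ^ 2 * s * (g₀ s) ^ 2 * (deriv g₀ s) ^ 5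
        - (1 / 2) * deriv a₀ (g₀ s) * g₀ s * (deriv g₀ s) ^ 2 * (p * s * deriv g₀ s + g₀ s)
        - p * s * deriv g₀ s + p * g₀ s)
    (G₀ : ℝ → ℝ)
    (hG₀ : ∀ s, G₀ s = s - (2 / (k + 2)) * g₀ s * Real.sqrt (a₀ (g₀ s))) :
    ∀ ε ∈ Set.Ioo (0 : ℝ) 1, ∃ s₁ > (0 : ℝ), ∀ s ≥ s₁,
      H₁ s ≤ ((1 - ε) / 4) * (k + 2) * (k - 2 * p) * deriv g₀ s * G₀ s ∧
      ((1 - ε) / 4) * (k + 2) * (k - 2 * p) * deriv g₀ s * G₀ s < 0 := by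
  intro ε hε
  have hk2 : 0 < k + 2 := by linarith
  have hψ₁ : ∀ t, DifferentiableAt ℝ ψ t := hψ.differentiable two_ne_zero
  have ha₀pos := a₀_pos ha₀ ha₁.le fun t => hν.trans_le (hbound t)
  have ha₀cont : Continuous a₀ := continuous_a₀ ha₀ (by linarith) hψ.continuous
  have ha₀diff (t : ℝ) (ht : t > 0) : DifferentiableAt ℝ a₀ t :=
    (hasDerivAt_a₀ ha₀ (hψ₁ t) ht).differentiableAt
  obtain ⟨s₀, hs₀, hGs₀⟩ := exists_pos_G hk2 hG₀ hg₀ hg₀0 ha₀pos ha₀cont ha₀diff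
    (eventually_pos_k_mul_a₀_sub ha₀ hψ (by nlinarith [hbound 0]))
  have hmono := monotoneOn_G hk2 hG₀ hg₀ hg₀0 ha₀pos ha₀cont ha₀diff fun t ht => by
    rw [k_mul_a₀_sub ha₀ (hψ₁ t) ht]
    exact hsign t ht.le
  have hg₀top : Tendsto g₀ atTop atTop := tendsto_atTop_of_hasDerivAt_comp hg₀
    (continuous_const.div (continuous_sqrt.comp ha₀cont) fun y => (sqrt_pos.2 (ha₀pos y)).ne')
    fun y => one_div_pos.2 (sqrt_pos.2 (ha₀pos y))
  obtain ⟨s₁, hs₁, h⟩ := exists_forall_ge_mul_le_of_tendsto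
    (div_pos (mul_pos hk2 (by linarith : 0 < 2 * p - k)) four_pos) hε
    ((tendsto_leadCoeffAt ha₁.ne' (by linarith) hlim1 hlim2 hlim3).comp hg₀top)
    ((tendsto_remainderCoeffAt (p := p) ha₁ (by linarith) hlim1 hlim2 hlim3).comp hg₀top)
    hs₀ hGs₀ (fun s hs => hmono hs₀.le (hs₀.le.trans hs) hs)
    (fun s => one_div_pos.2 (sqrt_pos.2 (ha₀pos (g₀ s))))
  refine ⟨s₁, hs₁, fun s hs => ?_⟩
  have hT : 0 < g₀ s := pos_of_hasDerivAt_inv_sqrt hg₀ hg₀0 ha₀pos (hs₁.trans_le hs)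
  rw [hH₁, (hg₀ s).deriv, H₁_decomposition hk2 ha₀ hψ hT (ha₀pos _), ← hG₀,
    show (1 - ε) / 4 * (k + 2) * (k - 2 * p) = -((1 - ε) * ((k + 2) * (2 * p - k) / 4)) by ring]
  exact h s hs
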